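/- arXiv:2502.13825 — 3 statements merged into one kernel-verified Lean document; each statement's English description precedes it below -/
import Mathlib

section
/- Let d_x, d_y be positive natural numbers, A a d_y × d_x real matrix, b ∈ ℝ^{d_y}, and for x ∈ ℝ^{d_x} define the class probabilities of the multiclass logistic regression model by p_k(x) = exp((A x + b)_k) / Σ_{l} exp((A x + b)_l) for k ∈ Fin d_y. Then for every λ ∈ [0,1], every x_i, x_j ∈ ℝ^{d_x}, and every class k, the class probability at the mixed input equals the normalized log-linear fusion of the class probabilities at the two inputs: p_k(λ·x_i + (1−λ)·x_j) = (p_k(x_i))^λ · (p_k(x_j))^{1−λ} / Σ_{l} (p_l(x_i))^λ · (p_l(x_j))^{1−λ}. Hence, for a multiclass logistic regression learner, probabilistic mixup with log-linear pooling of categorical distributions reduces to vanilla mixup. -/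
open Real Finset

/-- For multiclass logistic regression, probabilistic mixup with log-linear pooling
of the categorical outputs reduces to vanilla mixup: the class probabilities at the
mixed input equal the normalized log-linear fusion of the class probabilities. -/
theorem logisticRegression_probMix_eq_mixup
    (dx dy : ℕ) (hdx : 0 < dx) (hdy : 0 < dy)
    (A : Matrix (Fin dy) (Fin dx) ℝ) (b : Fin dy → ℝ)
    (p : (Fin dx → ℝ) → Fin dy → ℝ)
    (hp : ∀ x k, p x k =
      Real.exp ((A.mulVec x + b) k) / ∑ l, Real.exp ((A.mulVec x + b) l))
    (lam : ℝ) (hlam : lam ∈ Set.Icc (0:ℝ) 1) (xi xj : Fin dx → ℝ) :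
    ∀ k, p (lam • xi + (1 - lam) • xj) k =
      p xi k ^ lam * p xj k ^ (1 - lam) /
        ∑ l, p xi l ^ lam * p xj l ^ (1 - lam) := by
  intro k
  set ui := A.mulVec xi + b with hui
  set uj := A.mulVec xj + b with huj
  have hSi : (0:ℝ) < ∑ l, Real.exp (ui l) :=
    Finset.sum_pos (fun l _ => Real.exp_pos _) (by simp [Finset.univ_nonempty_iff, Fin.pos_iff_nonempty.mp hdy])
  have hSj : (0:ℝ) < ∑ l, Real.exp (uj l) :=
    Finset.sum_pos (fun l _ => Real.exp_pos _) (by simp [Finset.univ_nonempty_iff, Fin.pos_iff_nonempty.mp hdy])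
  set C : ℝ := (∑ l, Real.exp (ui l)) ^ lam * (∑ l, Real.exp (uj l)) ^ (1 - lam) with hC
  have hCpos : 0 < C := mul_pos (Real.rpow_pos_of_pos hSi _) (Real.rpow_pos_of_pos hSj _)
  have hmix : ∀ l, (A.mulVec (lam • xi + (1 - lam) • xj) + b) l
      = lam * ui l + (1 - lam) * uj l := by
    intro l
    simp [Matrix.mulVec_add, Matrix.mulVec_smul, hui, huj]
    ring
  have key : ∀ l, p xi l ^ lam * p xj l ^ (1 - lam)
      = Real.exp (lam * ui l + (1 - lam) * uj l) / C := by
    intro l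
    rw [hp, hp, Real.div_rpow (Real.exp_pos _).le hSi.le,
      Real.div_rpow (Real.exp_pos _).le hSj.le, ← Real.exp_mul, ← Real.exp_mul,
      div_mul_div_comm, ← Real.exp_add, hC,
      show ui l * lam + uj l * (1 - lam) = lam * ui l + (1 - lam) * uj l from by ring]
  have hsum : (∑ l, p xi l ^ lam * p xj l ^ (1 - lam))
      = (∑ l, Real.exp (lam * ui l + (1 - lam) * uj l)) / C := by
    rw [Finset.sum_div]
    exact Finset.sum_congr rfl fun l _ => key l
  rw [key k, hsum, hp]
  simp only [hmix]
  have hS : (0:ℝ) < ∑ x, Real.exp (lam * ui x + (1 - lam) * uj x) :=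
    Finset.sum_pos (fun l _ => Real.exp_pos _)
      (by simp [Finset.univ_nonempty_iff, Fin.pos_iff_nonempty.mp hdy])
  rw [div_div_div_eq]
  rw [mul_comm C, mul_div_mul_right _ _ (ne_of_gt hCpos)]
end

section
/- Let d_x, d_y be positive natural numbers, A a d_y × d_x real matrix, b ∈ ℝ^{d_y}, σ > 0, and define the homoscedastic Gaussian regression likelihood p(y|x) = (2πσ²)^{−d_y/2} · exp(−‖y − (A x + b)‖²/(2σ²)) for x ∈ ℝ^{d_x}, y ∈ ℝ^{d_y}. Then for every λ ∈ ℝ, every x_i, x_j ∈ ℝ^{d_x}, and every y ∈ ℝ^{d_y}, the log-likelihood at the mixed input decomposes as log p(y | λ·x_i + (1−λ)·x_j) = λ · log p(y | x_i) + (1−λ) · log p(y | x_j) + λ(1−λ)·‖A(x_i − x_j)‖²/(2σ²), where the additive constant λ(1−λ)·‖A(x_i − x_j)‖²/(2σ²) does not depend on y. Hence, for a linear regression learner with homoscedastic Gaussian likelihood, probabilistic mixup with log-linear pooling reduces to vanilla mixup: p(y | λx_i+(1−λ)x_j) is proportional, as a function of y, to p(y|x_i)^λ · p(y|x_j)^{1−λ}.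 -/
/-!
Up to a constant, the Gaussian log-likelihood is `-‖y - (A x + b)‖² / (2σ²)`. Since `x ↦ A x + b`
is affine, the mean at the mixed input is the same convex combination of the two means, and
`‖y - (λ u + (1 - λ) v)‖² = λ ‖y - u‖² + (1 - λ) ‖y - v‖² - λ (1 - λ) ‖u - v‖²`.
The last term does not involve `y`, so exponentiating turns the log-identity into geometric
pooling up to a constant factor.
-/

open Real Finset

theorem Matrix.mulVec_convexComb_add {R m n : Type*} [CommRing R] [Fintype n]
    (A : Matrix m n R) (b : m → R) (lam : R) (u v : n → R) :
    A.mulVec (lam • u + (1 - lam) • v) + b =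
      lam • (A.mulVec u + b) + (1 - lam) • (A.mulVec v + b) := by
  rw [Matrix.mulVec_add, Matrix.mulVec_smul, Matrix.mulVec_smul]
  ext k
  simp only [Pi.add_apply, Pi.smul_apply, smul_eq_mul]
  ring

theorem Finset.sum_sq_sub_convexComb {ι : Type*} (s : Finset ι) (lam : ℝ) (y u v : ι → ℝ) :
    ∑ k ∈ s, (y k - (lam • u + (1 - lam) • v) k) ^ 2 =
      lam * ∑ k ∈ s, (y k - u k) ^ 2 + (1 - lam) * ∑ k ∈ s, (y k - v k) ^ 2
        - lam * (1 - lam) * ∑ k ∈ s, (u - v) k ^ 2 := by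
  simp only [Finset.mul_sum, ← Finset.sum_add_distrib, ← Finset.sum_sub_distrib]
  refine Finset.sum_congr rfl fun k _ => ?_
  simp only [Pi.add_apply, Pi.sub_apply, Pi.smul_apply, smul_eq_mul]
  ring

theorem Real.eq_exp_mul_rpow_mul_rpow_of_log_eq {a b c lam K : ℝ} (ha : 0 < a) (hb : 0 < b)
    (hc : 0 < c) (h : log c = lam * log a + (1 - lam) * log b + K) :
    c = exp K * (a ^ lam * b ^ (1 - lam)) := by
  rw [← exp_log hc, h, rpow_def_of_pos ha, rpow_def_of_pos hb, ← exp_add, ← exp_add]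
  ring_nf

theorem linearRegression_probMix_eq_mixup_general
    (dx dy : ℕ)
    (A : Matrix (Fin dy) (Fin dx) ℝ) (b : Fin dy → ℝ) (σ : ℝ) (hσ : 0 < σ)
    (p : (Fin dx → ℝ) → (Fin dy → ℝ) → ℝ)
    (hp : ∀ x y, p x y = (2 * Real.pi * σ ^ 2) ^ (-(dy : ℝ) / 2) *
      Real.exp (-(∑ k, (y k - (A.mulVec x + b) k) ^ 2) / (2 * σ ^ 2)))
    (lam : ℝ) (xi xj : Fin dx → ℝ) :
    (∀ y : Fin dy → ℝ,
      Real.log (p (lam • xi + (1 - lam) • xj) y) =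
        lam * Real.log (p xi y) + (1 - lam) * Real.log (p xj y)
          + lam * (1 - lam) * (∑ k, (A.mulVec (xi - xj)) k ^ 2) / (2 * σ ^ 2)) ∧
    (∀ y : Fin dy → ℝ,
      p (lam • xi + (1 - lam) • xj) y =
        Real.exp (lam * (1 - lam) * (∑ k, (A.mulVec (xi - xj)) k ^ 2) / (2 * σ ^ 2)) *
          (p xi y ^ lam * p xj y ^ (1 - lam))) := by
  set C := (2 * Real.pi * σ ^ 2) ^ (-(dy : ℝ) / 2)
  have hC : 0 < C := rpow_pos_of_pos (by positivity) _
  have hp_pos : ∀ x y, 0 < p x y := fun x y => hp x y ▸ mul_pos hC (exp_pos _)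
  have hlog : ∀ x y,
      log (p x y) = log C - (∑ k, (y k - (A.mulVec x + b) k) ^ 2) / (2 * σ ^ 2) := by
    intro x y
    rw [hp, log_mul hC.ne' (exp_ne_zero _), log_exp, neg_div, sub_eq_add_neg]
  have hmeans : A.mulVec xi + b - (A.mulVec xj + b) = A.mulVec (xi - xj) := by
    rw [add_sub_add_right_eq_sub, Matrix.mulVec_sub]
  have hlog_mix : ∀ y, log (p (lam • xi + (1 - lam) • xj) y) =
      lam * log (p xi y) + (1 - lam) * log (p xj y)
        + lam * (1 - lam) * (∑ k, (A.mulVec (xi - xj)) k ^ 2) / (2 * σ ^ 2) := by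
    intro y
    rw [hlog, hlog, hlog, Matrix.mulVec_convexComb_add, Finset.sum_sq_sub_convexComb, hmeans]
    field_simp
    ring
  exact ⟨hlog_mix, fun y => eq_exp_mul_rpow_mul_rpow_of_log_eq (hp_pos _ _) (hp_pos _ _)
    (hp_pos _ _) (hlog_mix y)⟩

/-- For a linear regression learner with homoscedastic Gaussian likelihood,
the log-likelihood at the mixed input decomposes as the convex combination of the
log-likelihoods plus a `y`-independent constant; hence probabilistic mixup with
log-linear pooling reduces to vanilla mixup. -/
theorem linearRegression_probMix_eq_mixup
    (dx dy : ℕ) (hdx : 0 < dx) (hdy : 0 < dy)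
    (A : Matrix (Fin dy) (Fin dx) ℝ) (b : Fin dy → ℝ) (σ : ℝ) (hσ : 0 < σ)
    (p : (Fin dx → ℝ) → (Fin dy → ℝ) → ℝ)
    (hp : ∀ x y, p x y = (2 * Real.pi * σ ^ 2) ^ (-(dy : ℝ) / 2) *
      Real.exp (-(∑ k, (y k - (A.mulVec x + b) k) ^ 2) / (2 * σ ^ 2)))
    (lam : ℝ) (xi xj : Fin dx → ℝ) :
    (∀ y : Fin dy → ℝ,
      Real.log (p (lam • xi + (1 - lam) • xj) y) =
        lam * Real.log (p xi y) + (1 - lam) * Real.log (p xj y)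
          + lam * (1 - lam) * (∑ k, (A.mulVec (xi - xj)) k ^ 2) / (2 * σ ^ 2)) ∧
    (∀ y : Fin dy → ℝ,
      p (lam • xi + (1 - lam) • xj) y =
        Real.exp (lam * (1 - lam) * (∑ k, (A.mulVec (xi - xj)) k ^ 2) / (2 * σ ^ 2)) *
          (p xi y ^ lam * p xj y ^ (1 - lam))) :=
  linearRegression_probMix_eq_mixup_general dx dy A b σ hσ p hp lam xi xj
end

section
/- Let d_x, d_z be positive natural numbers, h : ℝ^{d_x} → ℝ^{d_z} any function (an encoder), and σ > 0. For x ∈ ℝ^{d_x} let q(z|x) = (2πσ²)^{−d_z/2}·exp(−‖z − h(x)‖²/(2σ²)) be the homoscedastic Gaussian embedding density. Then for every λ ∈ [0,1] and every x_i, x_j ∈ ℝ^{d_x}, the normalized log-linear fusion of the two embedding densities is exactly the Gaussian with the interpolated mean and unchanged variance: for all z ∈ ℝ^{d_z}, q(z|x_i)^λ · q(z|x_j)^{1−λ} / (∫_{ℝ^{d_z}} q(w|x_i)^λ · q(w|x_j)^{1−λ} dw) = (2πσ²)^{−d_z/2}·exp(−‖z − (λ·h(x_i) + (1−λ)·h(x_j))‖²/(2σ²)).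 In particular its mean is λ·h(x_i) + (1−λ)·h(x_j), so when embedding means are propagated through the decoder during training and inference, manifold probabilistic mixup (M-ProbMix) with log-linear fusion of homoscedastic Gaussian embeddings is equivalent to manifold mixup. -/
/-!
Up to the factor `-1/(2σ²)`, the log of `q(z|xᵢ)^λ q(z|xⱼ)^(1-λ)` is
`λ‖z - a‖² + (1 - λ)‖z - b‖² = ‖z - (λa + (1 - λ)b)‖² + λ(1 - λ)‖a - b‖²`,
so the pooled density is a `z`-independent multiple of the Gaussian density centred at
`λa + (1 - λ)b`, and normalizing removes that multiple.
-/

open Real MeasureTheory Module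

noncomputable section

variable {E : Type*} [NormedAddCommGroup E] [InnerProductSpace ℝ E]

theorem convexCombination_norm_sub_sq (a b z : E) (t : ℝ) :
    t * ‖z - a‖ ^ 2 + (1 - t) * ‖z - b‖ ^ 2 =
      ‖z - (t • a + (1 - t) • b)‖ ^ 2 + t * (1 - t) * ‖a - b‖ ^ 2 := by
  simp only [← real_inner_self_eq_norm_sq, inner_sub_left, inner_sub_right, inner_add_left,
    inner_add_right, real_inner_smul_left, real_inner_smul_right, real_inner_comm a b,
    real_inner_comm z a, real_inner_comm z b]
  ring

def isotropicGaussianPDF (σ : ℝ) (m z : E) : ℝ :=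
  (2 * π * σ ^ 2) ^ (-(finrank ℝ E : ℝ) / 2) * exp (-‖z - m‖ ^ 2 / (2 * σ ^ 2))

def logLinearPool [MeasurableSpace E] (μ : Measure E) (f g : E → ℝ) (t : ℝ) (z : E) : ℝ :=
  f z ^ t * g z ^ (1 - t) / ∫ w, f w ^ t * g w ^ (1 - t) ∂μ

theorem isotropicGaussianPDF_rpow_mul_rpow (σ t : ℝ) (a b z : E) :
    isotropicGaussianPDF σ a z ^ t * isotropicGaussianPDF σ b z ^ (1 - t) =
      exp (-(t * (1 - t) * ‖a - b‖ ^ 2) / (2 * σ ^ 2)) *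
        isotropicGaussianPDF σ (t • a + (1 - t) • b) z := by
  set C := (2 * π * σ ^ 2) ^ (-(finrank ℝ E : ℝ) / 2)
  have hC : 0 ≤ C := rpow_nonneg (by positivity) _
  have hCC : C ^ t * C ^ (1 - t) = C := by
    rw [← rpow_add' hC (by norm_num), add_sub_cancel, rpow_one]
  have hexponent : -‖z - a‖ ^ 2 / (2 * σ ^ 2) * t + -‖z - b‖ ^ 2 / (2 * σ ^ 2) * (1 - t) =
      -(t * (1 - t) * ‖a - b‖ ^ 2) / (2 * σ ^ 2) +
        -‖z - (t • a + (1 - t) • b)‖ ^ 2 / (2 * σ ^ 2) := by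
    linear_combination (-1 / (2 * σ ^ 2)) * convexCombination_norm_sub_sq a b z t
  simp only [isotropicGaussianPDF]
  rw [mul_rpow hC (exp_nonneg _), mul_rpow hC (exp_nonneg _), ← exp_mul, ← exp_mul,
    mul_mul_mul_comm, hCC, ← exp_add, hexponent, exp_add]
  ring

variable [FiniteDimensional ℝ E] [MeasurableSpace E] [BorelSpace E]

theorem integral_isotropicGaussianPDF {σ : ℝ} (hσ : σ ≠ 0) (m : E) :
    ∫ z, isotropicGaussianPDF σ m z = 1 := by
  have hb : 0 < 1 / (2 * σ ^ 2) := by positivity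
  have hexp : ∫ z : E, exp (-‖z - m‖ ^ 2 / (2 * σ ^ 2)) =
      (2 * π * σ ^ 2) ^ ((finrank ℝ E : ℝ) / 2) := by
    calc ∫ z : E, exp (-‖z - m‖ ^ 2 / (2 * σ ^ 2))
        = ∫ z : E, exp (-(1 / (2 * σ ^ 2)) * ‖z - m‖ ^ 2) := by
          congr with z; ring_nf
      _ = ∫ v : E, exp (-(1 / (2 * σ ^ 2)) * ‖v‖ ^ 2) :=
          integral_sub_right_eq_self (fun v : E ↦ exp (-(1 / (2 * σ ^ 2)) * ‖v‖ ^ 2)) m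
      _ = (2 * π * σ ^ 2) ^ ((finrank ℝ E : ℝ) / 2) := by
          rw [GaussianFourier.integral_rexp_neg_mul_sq_norm hb]
          congr 1; field_simp
  simp only [isotropicGaussianPDF]
  rw [integral_const_mul, hexp, ← rpow_add (by positivity), neg_div, neg_add_cancel, rpow_zero]

theorem logLinearPool_isotropicGaussianPDF {σ : ℝ} (hσ : σ ≠ 0) (t : ℝ) (a b : E) :
    logLinearPool volume (isotropicGaussianPDF σ a) (isotropicGaussianPDF σ b) t =
      isotropicGaussianPDF σ (t • a + (1 - t) • b) := by
  ext z
  simp only [logLinearPool, isotropicGaussianPDF_rpow_mul_rpow, integral_const_mul,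
    integral_isotropicGaussianPDF hσ, mul_one]
  exact mul_div_cancel_left₀ _ (exp_ne_zero _)

end

theorem mProbMix_homoscedasticGaussian_eq_manifoldMixup_general
    (dx dz : ℕ)
    (h : EuclideanSpace ℝ (Fin dx) → EuclideanSpace ℝ (Fin dz)) (σ : ℝ) (hσ : 0 < σ)
    (q : EuclideanSpace ℝ (Fin dz) → EuclideanSpace ℝ (Fin dx) → ℝ)
    (hq : ∀ z x, q z x = (2 * Real.pi * σ ^ 2) ^ (-(dz : ℝ) / 2) *
      Real.exp (-‖z - h x‖ ^ 2 / (2 * σ ^ 2)))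
    (lam : ℝ)
    (xi xj : EuclideanSpace ℝ (Fin dx)) :
    ∀ z : EuclideanSpace ℝ (Fin dz),
      q z xi ^ lam * q z xj ^ (1 - lam) /
          (∫ w : EuclideanSpace ℝ (Fin dz), q w xi ^ lam * q w xj ^ (1 - lam)) =
        (2 * Real.pi * σ ^ 2) ^ (-(dz : ℝ) / 2) *
          Real.exp (-‖z - (lam • h xi + (1 - lam) • h xj)‖ ^ 2 / (2 * σ ^ 2)) := by
  have hq_pdf : ∀ x, (q · x) = isotropicGaussianPDF σ (h x) := fun x ↦ by
    ext z; rw [hq, isotropicGaussianPDF, finrank_euclideanSpace_fin]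
  intro z
  have hpool := congrFun (logLinearPool_isotropicGaussianPDF hσ.ne' lam (h xi) (h xj)) z
  rwa [← hq_pdf, ← hq_pdf, logLinearPool, isotropicGaussianPDF,
    finrank_euclideanSpace_fin] at hpool

/-- M-ProbMix under homoscedastic Gaussian embeddings is manifold mixup: the
normalized log-linear fusion of two homoscedastic Gaussian embedding densities is
exactly the Gaussian centered at the interpolated mean with unchanged variance. -/
theorem mProbMix_homoscedasticGaussian_eq_manifoldMixup
    (dx dz : ℕ) (hdx : 0 < dx) (hdz : 0 < dz)
    (h : EuclideanSpace ℝ (Fin dx) → EuclideanSpace ℝ (Fin dz)) (σ : ℝ) (hσ : 0 < σ)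
    (q : EuclideanSpace ℝ (Fin dz) → EuclideanSpace ℝ (Fin dx) → ℝ)
    (hq : ∀ z x, q z x = (2 * Real.pi * σ ^ 2) ^ (-(dz : ℝ) / 2) *
      Real.exp (-‖z - h x‖ ^ 2 / (2 * σ ^ 2)))
    (lam : ℝ) (hlam : lam ∈ Set.Icc (0:ℝ) 1)
    (xi xj : EuclideanSpace ℝ (Fin dx)) :
    ∀ z : EuclideanSpace ℝ (Fin dz),
      q z xi ^ lam * q z xj ^ (1 - lam) /
          (∫ w : EuclideanSpace ℝ (Fin dz), q w xi ^ lam * q w xj ^ (1 - lam)) =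
        (2 * Real.pi * σ ^ 2) ^ (-(dz : ℝ) / 2) *
          Real.exp (-‖z - (lam • h xi + (1 - lam) • h xj)‖ ^ 2 / (2 * σ ^ 2)) :=
  mProbMix_homoscedasticGaussian_eq_manifoldMixup_general dx dz h σ hσ q hq lam xi xj
end
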